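/- A regular language L is star-free if and only if the minimal deterministic automaton M recognizing L has no powered circuits, where a powered circuit is a circuit through a state σ labelled by a word v^k with v nonempty and k > 1 such that the state reached from σ by reading v differs from the state reached from σ by reading v². -/

import Mathlib

/-- Star-free languages over an alphabet `A`: the closure of the finite
languages under concatenation, union, intersection, and complementation. -/
inductive StarFree {A : Type*} : Language A → Prop
  | finite (L : Language A) : L.Finite → StarFree L
  | concat (L₁ L₂ : Language A) : StarFree L₁ → StarFree L₂ → StarFree (L₁ * L₂)
  | union (L₁ L₂ : Language A) : StarFree L₁ → StarFree L₂ → StarFree (L₁ ⊔ L₂)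
  | inter (L₁ L₂ : Language A) : StarFree L₁ → StarFree L₂ → StarFree (L₁ ⊓ L₂)
  | compl (L : Language A) : StarFree L → StarFree Lᶜ

/-- `wpow v n` is the word `v` concatenated with itself `n` times. -/
def wpow {A : Type*} (v : List A) : ℕ → List A
  | 0 => []
  | n + 1 => v ++ wpow v n

/-!
A star-free language has a threshold `N` beyond which the exponent `n` of a factor `v^n` does not
affect membership, and this survives union, intersection, complement and concatenation. A powered
circuit in the minimal automaton breaks it: if `u` reaches `s`, `s^{v^k} = s`, and a suffix `z`
separates `s^v ≠ s^{v²}`, then `u v^(1+Nk) z` and `u v^(2+Nk) z` differ in membership.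

Conversely, without powered circuits every periodic point of a transition map `s ↦ s^v` is a fixed
point, so the transition monoid satisfies `x^(N+1) = x^N`. There `y = p y q` forces
`p y = y = y q`, which is what Schützenberger's argument needs: for `m ≠ 1` a word maps to `m` iff
it has a prefix `u a` entering the R-class of `m`, a suffix `a v` entering its L-class, and no
minimal factor (`a` or `a u b`) whose image is not J-above `m`. The fibres of `u` and `v` occurring
there belong to elements strictly J-above `m`, so induction down the J-order makes every fibre,
hence every recognised language, star-free.
-/

namespace StarFree

variable {A : Type*}

theorem bot : StarFree (⊥ : Language A) :=
  finite _ Set.finite_empty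

theorem top : StarFree (⊤ : Language A) :=
  compl_bot (α := Language A) ▸ compl _ bot

theorem iSup {ι : Type*} [Finite ι] {L : ι → Language A} (h : ∀ i, StarFree (L i)) :
    StarFree (⨆ i, L i) := by
  cases nonempty_fintype ι
  rw [← Finset.sup_univ_eq_iSup]
  exact Finset.sup_induction bot (fun _ h₁ _ h₂ => union _ _ h₁ h₂) fun i _ => h i

end StarFree

namespace Language

variable {A : Type*}

theorem mem_top_mul_mul_top {L : Language A} {w : List A} :
    w ∈ ⊤ * L * ⊤ ↔ ∃ x ∈ L, x <:+: w := by
  simp only [mem_mul, List.IsInfix]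
  constructor
  · rintro ⟨_, ⟨s, -, x, hx, rfl⟩, t, -, rfl⟩
    exact ⟨x, hx, s, t, rfl⟩
  · rintro ⟨x, hx, s, t, rfl⟩
    exact ⟨_, ⟨s, trivial, x, hx, rfl⟩, t, trivial, rfl⟩

end Language

section wpow

variable {A : Type*}

@[simp]
theorem wpow_nil (n : ℕ) : wpow ([] : List A) n = [] := by
  induction n <;> simp [wpow, *]

theorem wpow_add (v : List A) (m n : ℕ) : wpow v (m + n) = wpow v m ++ wpow v n := by
  induction m with
  | zero => simp [wpow]
  | succ m ih => simp [Nat.succ_add, wpow, ih]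

@[simp]
theorem length_wpow (v : List A) (n : ℕ) : (wpow v n).length = n * v.length := by
  induction n <;> simp [wpow, *, Nat.succ_mul, Nat.add_comm]

theorem wpow_append_append_wpow (v : List A) (i j : ℕ) :
    wpow v i ++ v ++ wpow v j = wpow v (i + 1 + j) := by
  rw [wpow_add, wpow_add]
  simp [wpow]

theorem append_eq_wpow_succ {v r s : List A} {n : ℕ} (h : r ++ s = wpow v (n + 1)) :
    ∃ i j v₁ v₂, i + j = n ∧ v₁ ++ v₂ = v ∧ r = wpow v i ++ v₁ ∧
      s = v₂ ++ wpow v j := by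
  induction n generalizing r s with
  | zero =>
    obtain ⟨v₂, rfl, rfl⟩ : ∃ v₂, v = r ++ v₂ ∧ s = v₂ :=
      ⟨s, by simpa [wpow] using h.symm, rfl⟩
    exact ⟨0, 0, r, s, rfl, rfl, by simp [wpow], by simp [wpow]⟩
  | succ n ih =>
    rw [wpow] at h
    rcases List.append_eq_append_iff.mp h with ⟨v₂, rfl, rfl⟩ | ⟨c, rfl, hc⟩
    · exact ⟨0, n + 1, r, v₂, by omega, rfl, by simp [wpow], rfl⟩
    · obtain ⟨i, j, v₁, v₂, hij, hv, rfl, rfl⟩ := ih hc.symm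
      exact ⟨i + 1, j, v₁, v₂, by omega, hv, by simp [wpow], rfl⟩

theorem append_wpow_append_eq_append {u v w x y : List A} {n : ℕ}
    (h : u ++ wpow v (n + 1) ++ w = x ++ y) :
    (∃ t, u = x ++ t ∧ y = t ++ wpow v (n + 1) ++ w) ∨
    (∃ t, w = t ++ y ∧ x = u ++ wpow v (n + 1) ++ t) ∨
    ∃ i j v₁ v₂, i + j = n ∧ v₁ ++ v₂ = v ∧ x = u ++ wpow v i ++ v₁ ∧
      y = v₂ ++ wpow v j ++ w := by
  rw [List.append_assoc] at h
  rcases List.append_eq_append_iff.mp h.symm with ⟨t, rfl, rfl⟩ | ⟨t, rfl, ht⟩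
  · exact Or.inl ⟨t, rfl, by simp⟩
  rcases List.append_eq_append_iff.mp ht with ⟨t', rfl, rfl⟩ | ⟨t', hv, rfl⟩
  · exact Or.inr (Or.inl ⟨t', rfl, by simp⟩)
  obtain ⟨i, j, v₁, v₂, hij, hv', rfl, rfl⟩ := append_eq_wpow_succ hv.symm
  exact Or.inr (Or.inr ⟨i, j, v₁, v₂, hij, hv', by simp, by simp⟩)

end wpow

namespace Language

variable {A : Type*}

/-- Stated for two arbitrary exponents `n, m ≥ N` rather than `n` and `n + 1`, so that a
concatenation can redistribute copies of `v` between its two factors. -/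
def IsAperiodicWith (L : Language A) (N : ℕ) : Prop :=
  ∀ ⦃n m : ℕ⦄, N ≤ n → N ≤ m → ∀ ⦃u v w : List A⦄,
    u ++ wpow v n ++ w ∈ L → u ++ wpow v m ++ w ∈ L

theorem exists_isAperiodicWith_of_finite {L : Language A} (hL : L.Finite) :
    ∃ N, L.IsAperiodicWith N := by
  obtain ⟨K, hK⟩ := (hL.image List.length).bddAbove
  refine ⟨K + 1, fun n m hn _ u v w hw => ?_⟩
  rcases eq_or_ne v [] with rfl | hv
  · simpa using hw
  · have hlen := hK ⟨_, hw, rfl⟩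
    have := List.length_pos_iff.mpr hv
    simp only [List.length_append, length_wpow] at hlen
    nlinarith

namespace IsAperiodicWith

variable {L L₁ L₂ : Language A} {N N' N₁ N₂ : ℕ}

theorem mono (h : L.IsAperiodicWith N) (hN : N ≤ N') : L.IsAperiodicWith N' :=
  fun _ _ hn hm => h (hN.trans hn) (hN.trans hm)

theorem transfer (h : L.IsAperiodicWith N) {i i' : ℕ} (hi : i = i' ∨ N ≤ i ∧ N ≤ i')
    {u v w : List A} (hw : u ++ wpow v i ++ w ∈ L) : u ++ wpow v i' ++ w ∈ L := by
  rcases hi with rfl | ⟨hi, hi'⟩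
  exacts [hw, h hi hi' hw]

theorem sup (h₁ : L₁.IsAperiodicWith N) (h₂ : L₂.IsAperiodicWith N) :
    (L₁ ⊔ L₂).IsAperiodicWith N :=
  fun _ _ hn hm _ _ _ => Or.imp (h₁ hn hm ·) (h₂ hn hm ·)

theorem inf (h₁ : L₁.IsAperiodicWith N) (h₂ : L₂.IsAperiodicWith N) :
    (L₁ ⊓ L₂).IsAperiodicWith N :=
  fun _ _ hn hm _ _ _ => And.imp (h₁ hn hm ·) (h₂ hn hm ·)

theorem compl (h : L.IsAperiodicWith N) : Lᶜ.IsAperiodicWith N :=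
  fun _ _ hn hm _ _ _ hw hw' => hw (h hm hn hw')

private theorem exists_add_eq_of_le {N₁ N₂ i j m : ℕ} (hij : N₁ + N₂ ≤ i + j)
    (hm : N₁ + N₂ ≤ m) :
    ∃ i' j', i' + j' = m ∧ (i = i' ∨ N₁ ≤ i ∧ N₁ ≤ i') ∧
      (j = j' ∨ N₂ ≤ j ∧ N₂ ≤ j') := by
  by_cases hi : i < N₁
  · exact ⟨i, m - i, by omega, by omega, by omega⟩
  by_cases hj : j < N₂
  · exact ⟨m - j, j, by omega, by omega, by omega⟩
  · exact ⟨N₁, m - N₁, by omega, by omega, by omega⟩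

theorem mul (h₁ : L₁.IsAperiodicWith N₁) (h₂ : L₂.IsAperiodicWith N₂) :
    (L₁ * L₂).IsAperiodicWith (N₁ + N₂ + 1) := by
  intro n m hn hm u v w hw
  obtain ⟨x, hx, y, hy, hxy⟩ := mem_mul.mp hw
  obtain ⟨n, rfl⟩ : ∃ n', n = n' + 1 := ⟨n - 1, by omega⟩
  obtain ⟨m, rfl⟩ : ∃ m', m = m' + 1 := ⟨m - 1, by omega⟩
  rcases append_wpow_append_eq_append hxy.symm with
    ⟨t, rfl, rfl⟩ | ⟨t, rfl, rfl⟩ | ⟨i, j, v₁, v₂, rfl, rfl, rfl, rfl⟩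
  · exact mem_mul.mpr ⟨x, hx, _, h₂ (m := m + 1) (by omega) (by omega) hy, by simp⟩
  · exact mem_mul.mpr ⟨_, h₁ (m := m + 1) (by omega) (by omega) hx, y, hy, by simp⟩
  · obtain ⟨i', j', rfl, hi, hj⟩ := exists_add_eq_of_le (by omega : N₁ + N₂ ≤ i + j)
      (by omega : N₁ + N₂ ≤ m)
    refine mem_mul.mpr ⟨_, h₁.transfer hi hx, _, h₂.transfer hj hy, ?_⟩
    rw [show i' + j' + 1 = i' + 1 + j' by omega, ← wpow_append_append_wpow]
    simp

end IsAperiodicWith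

end Language

theorem StarFree.exists_isAperiodicWith {A : Type*} {L : Language A} (h : StarFree L) :
    ∃ N, L.IsAperiodicWith N := by
  induction h with
  | finite L hL => exact L.exists_isAperiodicWith_of_finite hL
  | concat _ _ _ _ ih₁ ih₂ =>
    obtain ⟨N₁, h₁⟩ := ih₁
    obtain ⟨N₂, h₂⟩ := ih₂
    exact ⟨_, h₁.mul h₂⟩
  | union _ _ _ _ ih₁ ih₂ =>
    obtain ⟨N₁, h₁⟩ := ih₁
    obtain ⟨N₂, h₂⟩ := ih₂
    exact ⟨_, (h₁.mono (le_max_left N₁ N₂)).sup (h₂.mono (le_max_right N₁ N₂))⟩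
  | inter _ _ _ _ ih₁ ih₂ =>
    obtain ⟨N₁, h₁⟩ := ih₁
    obtain ⟨N₂, h₂⟩ := ih₂
    exact ⟨_, (h₁.mono (le_max_left N₁ N₂)).inf (h₂.mono (le_max_right N₁ N₂))⟩
  | compl _ _ ih =>
    obtain ⟨N, h⟩ := ih
    exact ⟨N, h.compl⟩

namespace Monoid

variable {M : Type*} [Monoid M]

def RLe (x y : M) : Prop := ∃ z, x = y * z

def LLe (x y : M) : Prop := ∃ z, x = z * y

def JLe (x y : M) : Prop := ∃ p q, x = p * y * q

def JLt (x y : M) : Prop := JLe x y ∧ ¬ JLe y x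

theorem RLe.refl (x : M) : RLe x x := ⟨1, (mul_one x).symm⟩

theorem LLe.refl (x : M) : LLe x x := ⟨1, (one_mul x).symm⟩

theorem JLe.refl (x : M) : JLe x x := ⟨1, 1, by simp⟩

theorem RLe.trans {x y z : M} : RLe x y → RLe y z → RLe x z := by
  rintro ⟨a, rfl⟩ ⟨b, rfl⟩
  exact ⟨b * a, by rw [mul_assoc]⟩

theorem LLe.trans {x y z : M} : LLe x y → LLe y z → LLe x z := by
  rintro ⟨a, rfl⟩ ⟨b, rfl⟩
  exact ⟨a * b, by rw [mul_assoc]⟩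

theorem JLe.trans {x y z : M} : JLe x y → JLe y z → JLe x z := by
  rintro ⟨p, q, rfl⟩ ⟨p', q', rfl⟩
  exact ⟨p * p', q' * q, by simp only [mul_assoc]⟩

theorem RLe.jLe {x y : M} : RLe x y → JLe x y := by
  rintro ⟨z, rfl⟩
  exact ⟨1, z, by rw [one_mul]⟩

theorem LLe.jLe {x y : M} : LLe x y → JLe x y := by
  rintro ⟨z, rfl⟩
  exact ⟨z, 1, by rw [mul_one]⟩

theorem rLe_mul_right (x y : M) : RLe (x * y) x := ⟨y, rfl⟩

theorem lLe_mul_left (x y : M) : LLe (x * y) y := ⟨x, rfl⟩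

theorem jLe_mul_mul (p x q : M) : JLe (p * x * q) x := ⟨p, q, rfl⟩

theorem jLe_one (x : M) : JLe x 1 := ⟨x, 1, by simp⟩

theorem JLt.ncard_not_jLe_lt [Finite M] {m n : M} (h : JLt m n) :
    {x | ¬ JLe x n}.ncard < {x | ¬ JLe x m}.ncard :=
  Set.ncard_lt_ncard ⟨fun _ hx hxm => hx (hxm.trans h.1), fun hsub => hsub h.2 (JLe.refl n)⟩

def IsAperiodic (M : Type*) [Monoid M] : Prop :=
  ∃ N : ℕ, ∀ x : M, x ^ (N + 1) = x ^ N

namespace IsAperiodic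

theorem mul_eq_and_mul_eq_of_eq_mul_mul (hM : IsAperiodic M) {p y q : M} (h : y = p * y * q) :
    p * y = y ∧ y * q = y := by
  obtain ⟨N, hN⟩ := hM
  have hpow : ∀ k, y = p ^ k * y * q ^ k := by
    intro k
    induction k with
    | zero => simp
    | succ k ih =>
      conv_lhs => rw [h, ih]
      rw [pow_succ', pow_succ]
      simp only [mul_assoc]
  rw [hpow N]
  constructor
  · rw [← mul_assoc, ← mul_assoc, ← pow_succ', hN]
  · rw [mul_assoc, ← pow_succ, hN]

theorem rLe_of_rLe_of_jLe (hM : IsAperiodic M) {x y : M} (hxy : RLe x y) (hyx : JLe y x) :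
    RLe y x := by
  obtain ⟨z, rfl⟩ := hxy
  obtain ⟨p, q, hpq⟩ := hyx
  have h : y = p * y * (z * q) := by simpa only [mul_assoc] using hpq
  exact ⟨q, by rw [mul_assoc, (hM.mul_eq_and_mul_eq_of_eq_mul_mul h).2]⟩

theorem lLe_of_lLe_of_jLe (hM : IsAperiodic M) {x y : M} (hxy : LLe x y) (hyx : JLe y x) :
    LLe y x := by
  obtain ⟨z, rfl⟩ := hxy
  obtain ⟨p, q, hpq⟩ := hyx
  have h : y = p * z * y * q := by simpa only [mul_assoc] using hpq
  exact ⟨p, by rw [← mul_assoc, (hM.mul_eq_and_mul_eq_of_eq_mul_mul h).1]⟩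

theorem eq_one_of_jLe (hM : IsAperiodic M) {x : M} (h : JLe 1 x) : x = 1 := by
  obtain ⟨p, q, hpq⟩ := h
  have hpx : p * x = 1 := by
    simpa using (hM.mul_eq_and_mul_eq_of_eq_mul_mul (y := 1) (by simpa using hpq)).1
  simpa using (hM.mul_eq_and_mul_eq_of_eq_mul_mul (y := 1) (p := p) (q := x) (by simp [hpx])).2

theorem eq_of_rLe_of_lLe_of_jLe (hM : IsAperiodic M) {x m : M} (hr : RLe x m) (hl : LLe x m)
    (hj : JLe m x) : x = m := by
  obtain ⟨e, he⟩ := hM.rLe_of_rLe_of_jLe hr hj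
  obtain ⟨l, rfl⟩ := hl
  exact (hM.mul_eq_and_mul_eq_of_eq_mul_mul he).1

theorem jLt_of_not_rLe_of_rLe_mul (hM : IsAperiodic M) {m n x : M} (hnm : ¬ RLe n m)
    (hmn : RLe m (n * x)) : JLt m n := by
  have hmn' : RLe m n := hmn.trans (rLe_mul_right n x)
  exact ⟨hmn'.jLe, fun h => hnm (hM.rLe_of_rLe_of_jLe hmn' h)⟩

theorem jLt_of_not_lLe_of_lLe_mul (hM : IsAperiodic M) {m n x : M} (hnm : ¬ LLe n m)
    (hmn : LLe m (x * n)) : JLt m n := by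
  have hmn' : LLe m n := hmn.trans (lLe_mul_left x n)
  exact ⟨hmn'.jLe, fun h => hnm (hM.lLe_of_lLe_of_jLe hmn' h)⟩

theorem jLt_of_jLe_mul_of_jLe_mul (hM : IsAperiodic M) {m n a b : M} (ha : JLe m (a * n))
    (hb : JLe m (n * b)) (hab : ¬ JLe m (a * n * b)) : JLt m n := by
  refine ⟨ha.trans (lLe_mul_left a n).jLe, fun hnm => hab ?_⟩
  obtain ⟨e, he⟩ := hM.rLe_of_rLe_of_jLe (rLe_mul_right n b) (hnm.trans hb)
  exact ha.trans ⟨1, e, by rw [one_mul, mul_assoc, mul_assoc, ← mul_assoc n, ← he]⟩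

end IsAperiodic

end Monoid

namespace List

variable {A : Type*} {P : List A → Prop}

theorem exists_prefix_crossing (h₀ : ¬ P []) {w : List A} (hw : P w) :
    ∃ u a z, w = u ++ a :: z ∧ ¬ P u ∧ P (u ++ [a]) := by
  induction w using List.reverseRecOn with
  | nil => exact absurd hw h₀
  | append_singleton w b ih =>
    by_cases hPw : P w
    · obtain ⟨u, a, z, rfl, hu, hua⟩ := ih hPw
      exact ⟨u, a, z ++ [b], by simp, hu, hua⟩
    · exact ⟨w, b, [], by simp, hPw, hw⟩

theorem exists_suffix_crossing (h₀ : ¬ P []) {w : List A} (hw : P w) :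
    ∃ z a v, w = z ++ a :: v ∧ ¬ P v ∧ P (a :: v) := by
  induction w with
  | nil => exact absurd hw h₀
  | cons b w ih =>
    by_cases hPw : P w
    · obtain ⟨z, a, v, rfl, hv, hav⟩ := ih hPw
      exact ⟨b :: z, a, v, rfl, hv, hav⟩
    · exact ⟨[], b, w, rfl, hPw, hw⟩

theorem induction_of_cons_of_concat (nil : P []) (singleton : ∀ a, P [a])
    (cons_concat : ∀ a u b, P (a :: u) → P (u ++ [b]) → P (a :: u ++ [b])) (w : List A) :
    P w := by
  induction h : w.length using Nat.strong_induction_on generalizing w with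
  | _ n ih =>
    rcases w with _ | ⟨a, t⟩
    · exact nil
    rcases List.eq_nil_or_concat t with rfl | ⟨u, b, rfl⟩
    · exact singleton a
    subst h
    rw [List.concat_eq_append]
    exact cons_concat a u b (ih _ (by simp) _ rfl) (ih _ (by simp) _ rfl)

end List

open Monoid

namespace Language

variable {A M : Type*}

@[simp]
theorem mem_singleton_iff {x y : List A} : x ∈ ({y} : Language A) ↔ x = y := Iff.rfl

theorem mem_sup {L₁ L₂ : Language A} {x : List A} : x ∈ L₁ ⊔ L₂ ↔ x ∈ L₁ ∨ x ∈ L₂ :=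
  Iff.rfl

theorem mem_compl {L : Language A} {x : List A} : x ∈ Lᶜ ↔ x ∉ L := Iff.rfl

variable [Monoid M] (f : A → M)

def fiber (m : M) : Language A := {w | (w.map f).prod = m}

def rEntry (m : M) : Language A :=
  ⨆ p : {p : M × A // ¬ RLe p.1 m ∧ RLe (p.1 * f p.2) m ∧ RLe m (p.1 * f p.2)},
    fiber f p.1.1 * {[p.1.2]}

def lEntry (m : M) : Language A :=
  ⨆ p : {p : A × M // ¬ LLe p.2 m ∧ LLe (f p.1 * p.2) m ∧ LLe m (f p.1 * p.2)},
    {[p.1.1]} * fiber f p.1.2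

def jExit (m : M) : Language A :=
  (⨆ a : {a : A // ¬ JLe m (f a)}, {[a.1]}) ⊔
    ⨆ p : {p : A × M × A // JLe m (f p.1 * p.2.1) ∧ JLe m (p.2.1 * f p.2.2) ∧
        ¬ JLe m (f p.1 * p.2.1 * f p.2.2)},
      {[p.1.1]} * fiber f p.1.2.1 * {[p.1.2.2]}

variable {f} {m : M} {w : List A}

@[simp]
theorem mem_fiber : w ∈ fiber f m ↔ (w.map f).prod = m := Iff.rfl

theorem mem_rEntry_mul_top (h₁ : ¬ RLe 1 m) (hw : w ∈ fiber f m) : w ∈ rEntry f m * ⊤ := by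
  rw [mem_fiber] at hw
  obtain ⟨u, a, z, rfl, hu, hua⟩ :=
    List.exists_prefix_crossing (P := fun x => RLe (x.map f).prod m) (by simpa using h₁)
      (by rw [hw]; exact RLe.refl m)
  refine mem_mul.mpr ⟨u ++ [a], mem_iSup.mpr ⟨⟨((u.map f).prod, a), hu, by simpa using hua,
    ?_⟩, mem_mul.mpr ⟨u, rfl, [a], rfl, rfl⟩⟩, z, trivial, by simp⟩
  exact ⟨(z.map f).prod, by simp [← hw, mul_assoc]⟩

theorem rLe_of_mem_rEntry_mul_top (hw : w ∈ rEntry f m * ⊤) : RLe (w.map f).prod m := by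
  simp only [rEntry, mem_mul, mem_iSup] at hw
  obtain ⟨_, ⟨⟨⟨n, a⟩, -, hna, -⟩, u, rfl, _, rfl, rfl⟩, z, -, rfl⟩ := hw
  simpa [mul_assoc] using (rLe_mul_right _ _).trans hna

theorem mem_top_mul_lEntry (h₁ : ¬ LLe 1 m) (hw : w ∈ fiber f m) : w ∈ ⊤ * lEntry f m := by
  rw [mem_fiber] at hw
  obtain ⟨z, a, v, rfl, hv, hav⟩ :=
    List.exists_suffix_crossing (P := fun x => LLe (x.map f).prod m) (by simpa using h₁)
      (by rw [hw]; exact LLe.refl m)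
  refine mem_mul.mpr ⟨z, trivial, a :: v, mem_iSup.mpr ⟨⟨(a, (v.map f).prod), hv,
    by simpa using hav, ?_⟩, mem_mul.mpr ⟨[a], rfl, v, rfl, rfl⟩⟩, rfl⟩
  exact ⟨(z.map f).prod, by simp [← hw]⟩

theorem lLe_of_mem_top_mul_lEntry (hw : w ∈ ⊤ * lEntry f m) : LLe (w.map f).prod m := by
  simp only [lEntry, mem_mul, mem_iSup] at hw
  obtain ⟨z, -, _, ⟨⟨⟨a, n⟩, -, han, -⟩, _, rfl, v, rfl, rfl⟩, rfl⟩ := hw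
  simpa [← mul_assoc] using (lLe_mul_left _ _).trans han

theorem mem_jExit {x : List A} :
    x ∈ jExit f m ↔ (∃ a, x = [a] ∧ ¬ JLe m (f a)) ∨
      ∃ a u b, x = a :: u ++ [b] ∧ JLe m (f a * (u.map f).prod) ∧
        JLe m ((u.map f).prod * f b) ∧ ¬ JLe m (f a * (u.map f).prod * f b) := by
  simp only [jExit, mem_sup, mem_iSup, mem_mul, mem_singleton_iff, mem_fiber]
  constructor
  · rintro (⟨⟨a, ha⟩, rfl⟩ |
      ⟨⟨⟨a, _, b⟩, h⟩, _, ⟨_, rfl, u, rfl, rfl⟩, _, rfl, rfl⟩)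
    exacts [Or.inl ⟨a, rfl, ha⟩, Or.inr ⟨a, u, b, rfl, h⟩]
  · rintro (⟨a, rfl, ha⟩ | ⟨a, u, b, rfl, h⟩)
    exacts [Or.inl ⟨⟨a, ha⟩, rfl⟩,
      Or.inr ⟨⟨⟨a, _, b⟩, h⟩, _, ⟨_, rfl, u, rfl, rfl⟩, _, rfl, rfl⟩]

theorem mem_top_mul_jExit_mul_top_iff :
    w ∈ ⊤ * jExit f m * ⊤ ↔ ¬ JLe m (w.map f).prod := by
  rw [mem_top_mul_mul_top]
  constructor
  · rintro ⟨x, hx, s, t, rfl⟩ hm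
    have hmx : JLe m (x.map f).prod := hm.trans (by
      simpa [mul_assoc] using jLe_mul_mul (s.map f).prod (x.map f).prod (t.map f).prod)
    rcases mem_jExit.mp hx with ⟨a, rfl, ha⟩ | ⟨a, u, b, rfl, -, -, hmaub⟩
    · exact ha (by simpa using hmx)
    · exact hmaub (by simpa [mul_assoc] using hmx)
  · intro hm
    by_contra hw
    refine hm (List.induction_of_cons_of_concat (P := fun x => x <:+: w → JLe m (x.map f).prod)
      (fun _ => by simpa using jLe_one m) (fun a ha => ?_) (fun a u b hau hub haub => ?_) w
      (List.infix_refl w))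
    · by_contra hma
      exact hw ⟨[a], mem_jExit.mpr (Or.inl ⟨a, rfl, by simpa using hma⟩), ha⟩
    · by_contra hmaub
      refine hw ⟨_, mem_jExit.mpr (Or.inr ⟨a, u, b, rfl, ?_, ?_, ?_⟩), haub⟩
      · simpa using hau ((List.prefix_append _ _).isInfix.trans haub)
      · simpa using hub ((List.suffix_cons a _).isInfix.trans haub)
      · simpa [mul_assoc] using hmaub

end Language

namespace Monoid.IsAperiodic

open Language

variable {A M : Type*} [Monoid M] {f : A → M} {m : M}

theorem fiber_one (hM : IsAperiodic M) : fiber f 1 = (⊤ * jExit f 1 * ⊤)ᶜ := by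
  ext w
  rw [mem_compl, mem_top_mul_jExit_mul_top_iff, not_not, mem_fiber]
  exact ⟨fun h => by rw [h]; exact JLe.refl 1, hM.eq_one_of_jLe⟩

theorem fiber_eq (hM : IsAperiodic M) (h₁ : ¬ JLe 1 m) :
    fiber f m = rEntry f m * ⊤ ⊓ ⊤ * lEntry f m ⊓ (⊤ * jExit f m * ⊤)ᶜ := by
  ext w
  simp only [mem_inf, mem_compl, mem_top_mul_jExit_mul_top_iff, not_not]
  constructor
  · intro hw
    exact ⟨⟨mem_rEntry_mul_top (fun h => h₁ h.jLe) hw,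
      mem_top_mul_lEntry (fun h => h₁ h.jLe) hw⟩, hw ▸ JLe.refl m⟩
  · rintro ⟨⟨hr, hl⟩, hj⟩
    exact hM.eq_of_rLe_of_lLe_of_jLe (rLe_of_mem_rEntry_mul_top hr)
      (lLe_of_mem_top_mul_lEntry hl) hj

variable [Finite A] [Finite M]

theorem starFree_rEntry (hM : IsAperiodic M) (ih : ∀ n, JLt m n → StarFree (fiber f n)) :
    StarFree (rEntry f m) :=
  StarFree.iSup fun p => .concat _ _ (ih _ (hM.jLt_of_not_rLe_of_rLe_mul p.2.1 p.2.2.2))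
    (.finite _ (Set.finite_singleton _))

theorem starFree_lEntry (hM : IsAperiodic M) (ih : ∀ n, JLt m n → StarFree (fiber f n)) :
    StarFree (lEntry f m) :=
  StarFree.iSup fun p => .concat _ _ (.finite _ (Set.finite_singleton _))
    (ih _ (hM.jLt_of_not_lLe_of_lLe_mul p.2.1 p.2.2.2))

theorem starFree_jExit (hM : IsAperiodic M) (ih : ∀ n, JLt m n → StarFree (fiber f n)) :
    StarFree (jExit f m) :=
  .union _ _ (StarFree.iSup fun _ => .finite _ (Set.finite_singleton _))
    (StarFree.iSup fun p => .concat _ _ (.concat _ _ (.finite _ (Set.finite_singleton _))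
      (ih _ (hM.jLt_of_jLe_mul_of_jLe_mul p.2.1 p.2.2.1 p.2.2.2)))
      (.finite _ (Set.finite_singleton _)))

theorem starFree_fiber (hM : IsAperiodic M) (m : M) : StarFree (fiber f m) := by
  induction m using (measure fun m : M => {x | ¬ JLe x m}.ncard).wf.induction with
  | _ m ih =>
  replace ih : ∀ n, JLt m n → StarFree (fiber f n) := fun n h => ih n h.ncard_not_jLe_lt
  have hexit : StarFree (⊤ * jExit f m * ⊤) :=
    .concat _ _ (.concat _ _ .top (hM.starFree_jExit ih)) .top
  by_cases h₁ : JLe 1 m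
  · obtain rfl := hM.eq_one_of_jLe h₁
    rw [hM.fiber_one]
    exact .compl _ hexit
  · rw [hM.fiber_eq h₁]
    exact .inter _ _ (.inter _ _ (.concat _ _ (hM.starFree_rEntry ih) .top)
      (.concat _ _ .top (hM.starFree_lEntry ih))) (.compl _ hexit)

theorem starFree_preimage (hM : IsAperiodic M) (P : Set M) :
    StarFree ({w | (w.map f).prod ∈ P} : Language A) := by
  have : ({w | (w.map f).prod ∈ P} : Language A) = ⨆ m : P, fiber f m := by
    refine Language.ext fun w => ?_
    rw [Language.mem_iSup]
    exact ⟨fun h => ⟨⟨_, h⟩, rfl⟩, by rintro ⟨⟨m, hm⟩, rfl⟩; exact hm⟩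
  rw [this]
  exact StarFree.iSup fun m => hM.starFree_fiber m

end Monoid.IsAperiodic

open Function in
theorem Function.IsPeriodicPt.isFixedPt_of_isFixedPt_apply {α : Type*} {g : α → α} {k : ℕ}
    {s : α} (hper : IsPeriodicPt g k s) (hk : 0 < k) (h : IsFixedPt g (g s)) : IsFixedPt g s := by
  obtain ⟨k, rfl⟩ : ∃ k', k = k' + 1 := ⟨k - 1, by omega⟩
  have := hper.eq
  rwa [iterate_succ_apply, (h.iterate k).eq] at this

open Function in
theorem Function.iterate_card_succ_eq {α : Type*} [Fintype α] {g : α → α}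
    (h : periodicPts g ⊆ fixedPoints g) : g^[Fintype.card α + 1] = g^[Fintype.card α] := by
  funext s
  obtain ⟨i, j, hij, heq⟩ := Fintype.exists_ne_map_eq_of_card_lt
    (fun i : Fin (Fintype.card α + 1) => g^[i] s) (by simp)
  wlog hlt : (i : ℕ) < j generalizing i j
  · exact this j i hij.symm heq.symm (by omega)
  have hper : IsPeriodicPt g (j - i) (g^[i] s) := by
    rw [IsPeriodicPt, IsFixedPt, ← iterate_add_apply, Nat.sub_add_cancel hlt.le]
    exact heq.symm
  have hfix : IsFixedPt g (g^[i] s) := h ⟨j - i, by omega, hper⟩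
  have hstab : ∀ n : ℕ, i ≤ n → g^[n] s = g^[i] s := fun n hn => by
    rw [← Nat.sub_add_cancel hn, iterate_add_apply, (hfix.iterate _).eq]
  rw [hstab (Fintype.card α + 1) (by omega), hstab (Fintype.card α) (by omega)]

namespace DFA

variable {A σ : Type*} (M : DFA A σ)

def HasPoweredCircuit : Prop :=
  ∃ (s : σ) (v : List A) (k : ℕ), v ≠ [] ∧ 1 < k ∧
    M.evalFrom s (wpow v k) = s ∧ M.evalFrom s v ≠ M.evalFrom s (wpow v 2)

theorem evalFrom_wpow (s : σ) (v : List A) (k : ℕ) :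
    M.evalFrom s (wpow v k) = (M.evalFrom · v)^[k] s := by
  induction k generalizing s with
  | zero => rfl
  | succ k ih => rw [wpow, evalFrom_of_append, ih, Function.iterate_succ_apply]

def transition (a : A) : (Function.End σ)ᵐᵒᵖ := .op (M.step · a)

theorem unop_prod_map_transition (w : List A) :
    (w.map M.transition).prod.unop = (M.evalFrom · w) := by
  induction w with
  | nil => rfl
  | cons a w ih =>
    rw [List.map_cons, List.prod_cons, MulOpposite.unop_mul, ih]
    rfl

def transitionMonoid : Submonoid (Function.End σ)ᵐᵒᵖ :=
  MonoidHom.mrange (FreeMonoid.lift M.transition)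

def toTransitionMonoid (a : A) : M.transitionMonoid :=
  (FreeMonoid.lift M.transition).mrangeRestrict (FreeMonoid.of a)

theorem unop_prod_map_toTransitionMonoid (w : List A) :
    ((w.map M.toTransitionMonoid).prod : (Function.End σ)ᵐᵒᵖ).unop = (M.evalFrom · w) := by
  rw [Submonoid.coe_list_prod, List.map_map]
  exact M.unop_prod_map_transition w

instance [Finite σ] : Finite M.transitionMonoid :=
  Finite.of_injective (β := σ → σ) (fun x => (x : (Function.End σ)ᵐᵒᵖ).unop)
    (MulOpposite.unop_injective.comp Subtype.val_injective)

variable {M}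

open Function in
theorem periodicPts_subset_fixedPoints (hM : ¬ M.HasPoweredCircuit) (v : List A) :
    periodicPts (M.evalFrom · v) ⊆ fixedPoints (M.evalFrom · v) := by
  rintro s ⟨k, hk, hper⟩
  refine hper.isFixedPt_of_isFixedPt_apply hk ?_
  rcases eq_or_ne v [] with rfl | hv
  · rfl
  rcases (by omega : k = 1 ∨ 1 < k) with rfl | hk
  · exact congrArg (M.evalFrom · v) hper
  · by_contra hne
    refine hM ⟨s, v, k, hv, hk, by rw [evalFrom_wpow]; exact hper, fun h => hne ?_⟩
    simpa [IsFixedPt, evalFrom_wpow] using h.symm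

theorem isAperiodic_transitionMonoid [Fintype σ] (hM : ¬ M.HasPoweredCircuit) :
    Monoid.IsAperiodic M.transitionMonoid := by
  refine ⟨Fintype.card σ, fun ⟨_, y, rfl⟩ => Subtype.ext (MulOpposite.unop_injective ?_)⟩
  show (FreeMonoid.lift M.transition y ^ _).unop = (FreeMonoid.lift M.transition y ^ _).unop
  rw [MulOpposite.unop_pow, MulOpposite.unop_pow, FreeMonoid.lift_apply, unop_prod_map_transition]
  exact Function.iterate_card_succ_eq (periodicPts_subset_fixedPoints hM y.toList)

theorem accepts_eq_setOf_prod_map_toTransitionMonoid :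
    M.accepts = {w | (w.map M.toTransitionMonoid).prod ∈
      {x : M.transitionMonoid | ((x : (Function.End σ)ᵐᵒᵖ).unop : σ → σ) M.start ∈ M.accept}} :=
  Language.ext fun w => by
    rw [mem_accepts, eval, ← congrFun (M.unop_prod_map_toTransitionMonoid w) M.start]
    rfl

theorem HasPoweredCircuit.not_isAperiodicWith (hM : M.HasPoweredCircuit)
    (hreach : ∀ s : σ, ∃ w : List A, M.evalFrom M.start w = s)
    (hmin : ∀ s t : σ,
      (∀ w : List A, M.evalFrom s w ∈ M.accept ↔ M.evalFrom t w ∈ M.accept) → s = t)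
    (N : ℕ) : ¬ M.accepts.IsAperiodicWith N := by
  obtain ⟨s, v, k, -, hk, hcirc, hne⟩ := hM
  obtain ⟨u, hu⟩ := hreach s
  obtain ⟨z, hz⟩ : ∃ z, ¬ (M.evalFrom (M.evalFrom s v) z ∈ M.accept ↔
      M.evalFrom (M.evalFrom s (wpow v 2)) z ∈ M.accept) := by
    by_contra! h
    exact hne (hmin _ _ h)
  rw [evalFrom_wpow] at hcirc
  have hmem : ∀ j, u ++ wpow v (j + N * k) ++ z ∈ M.accepts ↔
      M.evalFrom (M.evalFrom s (wpow v j)) z ∈ M.accept := fun j => by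
    rw [mem_accepts, eval, evalFrom_of_append, evalFrom_of_append, hu, evalFrom_wpow,
      evalFrom_wpow, Function.iterate_add_apply, (Function.IsPeriodicPt.const_mul hcirc N).eq]
  intro hL
  have h₁ := hmem 1
  have h₂ := hmem 2
  rw [show wpow v 1 = v by simp [wpow]] at h₁
  rw [← h₁, ← h₂] at hz
  exact hz ⟨fun h => hL (by nlinarith) (by nlinarith) h,
    fun h => hL (by nlinarith) (by nlinarith) h⟩

end DFA

/-- A regular language is star-free iff its minimal automaton (a complete DFA
with all states reachable and with pairwise distinct futures) has no powered
circuits: no state `s`, nonempty word `v` and `k > 1` with `s^{v^k} = s` but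
`s^v ≠ s^{v²}`. -/
theorem stmt15 {A σ : Type*} [Fintype A] [Fintype σ] (M : DFA A σ)
    (L : Language A) (hacc : M.accepts = L)
    (hreach : ∀ s : σ, ∃ w : List A, M.evalFrom M.start w = s)
    (hmin : ∀ s t : σ,
      (∀ w : List A, M.evalFrom s w ∈ M.accept ↔ M.evalFrom t w ∈ M.accept) →
        s = t) :
    StarFree L ↔
      ¬ ∃ (s : σ) (v : List A) (k : ℕ), v ≠ [] ∧ 1 < k ∧
        M.evalFrom s (wpow v k) = s ∧
        M.evalFrom s v ≠ M.evalFrom s (wpow v 2) := by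
  subst hacc
  constructor
  · rintro hL hM
    obtain ⟨N, hN⟩ := hL.exists_isAperiodicWith
    exact DFA.HasPoweredCircuit.not_isAperiodicWith hM hreach hmin N hN
  · intro hM
    rw [M.accepts_eq_setOf_prod_map_toTransitionMonoid]
    exact (DFA.isAperiodic_transitionMonoid hM).starFree_preimage _
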